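/- Let λ be a finite Borel measure on ℳ, and let R₁, …, R_k be random Borel subsets of ℳ defined on a probability space (Ω, ℙ) via jointly measurable indicators χ_j : Ω × ℳ → {0,1} (R_j(ω) := {x : χ_j(ω,x) = 1}), such that the σ-algebras generated by the χ_j are mutually independent, the R_j are identically distributed, each R_j is symmetric (R_j and its complement R_jᶜ are identically distributed as random sets: for all Borel sets B₁,…,B_p, the random vectors (λ(B₁∩R_j),…,λ(B_p∩R_j)) and (λ(B₁∩R_jᶜ),…,λ(B_p∩R_jᶜ)) have the same law), and each R_j is shattering for λ with constant α > 0, i.e. λ(A)³ ≤ 2α·E[λ(A∩R_j)·λ(A∩R_jᶜ)] for every Borel A ⊆ ℳ. For ε ∈ {0,1}^k write R_j^1 := R_j and R_j^0 := R_jᶜ. Then E[ Σ_{ε ∈ {0,1}^k} λ(R₁^{ε₁} ∩ ⋯ ∩ R_k^{ε_k})² ] ≤ α*/(k+1), where α* := max(λ(ℳ)², 2α·λ(ℳ)). -/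

import Mathlib

open MeasureTheory Set Filter
open scoped ENNReal NNReal

noncomputable section

namespace MSEW

/-- `LipLE dE f c` : the bounded-Lipschitz norm of `f`, namely
`sup_x |f x| + sup_{x ≠ y} |f x - f y| / dE x y`, is at most `c`;
phrased without suprema, relative to an abstract distance function `dE`. -/
def LipLE {E : Type*} (dE : E → E → ℝ) (f : E → ℝ) (c : ℝ) : Prop :=
  ∃ a b : ℝ, 0 ≤ a ∧ 0 ≤ b ∧ a + b ≤ c ∧ (∀ x, |f x| ≤ a) ∧
    ∀ x y, |f x - f y| ≤ b * dE x y

/-- Integral of `f : E → ℝ` against a finite integer-valued measure, represented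
as the multiset of its atoms (a genotype). -/
def gInt {E : Type*} (g : Multiset E) (f : E → ℝ) : ℝ := (g.map f).sum

/-- The mass `g(A)` that a genotype `g` assigns to a set `A`. -/
def gMass {E : Type*} (g : Multiset E) (A : Set E) : ℝ := gInt g (A.indicator 1)

/-- The σ-algebra on genotypes generated by the counting functionals
`g ↦ g(A)` for measurable `A`. -/
instance multisetMeasurableSpace {E : Type*} [MeasurableSpace E] :
    MeasurableSpace (Multiset E) :=
  MeasurableSpace.generateFrom
    { s | ∃ (A : Set E) (n : ℕ), MeasurableSet A ∧ s = { g : Multiset E | gMass g A = n } }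

/-- Wasserstein distance between two (finite) measures: the supremum of
differences of integrals of test functions of bounded-Lipschitz norm at most one. -/
def wasDist {E : Type*} [MeasurableSpace E] (dE : E → E → ℝ) (P Q : Measure E) : ℝ :=
  sSup { r | ∃ f : E → ℝ, LipLE dE f 1 ∧ r = |∫ x, f x ∂P - ∫ x, f x ∂Q| }

/-- Wasserstein norm of a finite signed measure, `sup { |∫ f dπ| : ‖f‖_Lip ≤ 1 }`. -/
def wasNorm {E : Type*} [MeasurableSpace E] (dE : E → E → ℝ) (π : SignedMeasure E) : ℝ :=
  wasDist dE π.toJordanDecomposition.posPart π.toJordanDecomposition.negPart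

/-- The Wasserstein metric on genotypes, `d(g,h) = ‖g - h‖_Was`. -/
def dG {M : Type*} [MetricSpace M] (g h : Multiset M) : ℝ :=
  sSup { r | ∃ f : M → ℝ, LipLE dist f 1 ∧ r = |gInt g f - gInt h f| }

/-- The measure on `E` associated with a genotype: the finite sum of Dirac masses. -/
def genMeasure {E : Type*} [MeasurableSpace E] (g : Multiset E) : Measure E :=
  (g.map fun x => Measure.dirac x).sum

/-- The intensity measure `μP` of a law `P` on genotypes: `μP(A) = ∫ g(A) dP(g)`. -/
def intensity {E : Type*} [MeasurableSpace E] (P : Measure (Multiset E)) : Measure E :=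
  P.bind genMeasure

/-- The law `Π_π` of a Poisson random measure with intensity `π`:
`Π_π[F] = e^{-π(univ)} ∑_k (1/k!) ∫ F(δ_{x₁}+⋯+δ_{x_k}) dπ^{⊗k}`. -/
def poissonLaw {M : Type*} [MeasurableSpace M] (π : Measure M) : Measure (Multiset M) :=
  ENNReal.ofReal (Real.exp (-(π Set.univ).toReal)) •
    Measure.sum fun k : ℕ =>
      ((Nat.factorial k : ℝ≥0∞))⁻¹ •
        Measure.map (fun x : Fin k → M => ∑ i, ({x i} : Multiset M))
          (Measure.pi fun _ : Fin k => π)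

/-- A selective cost with Lipschitz constant `K`: a Borel function
`S : 𝒢 → [0,∞)` with `S(0) = 0`, monotone under adding mutations, and
Lipschitz with constant `K` for the Wasserstein metric on genotypes. -/
structure IsSelectiveCost {M : Type*} [MetricSpace M] [MeasurableSpace M]
    (S : Multiset M → ℝ) (K : ℝ) : Prop where
  measurable : Measurable S
  nonneg : ∀ g, 0 ≤ S g
  map_zero : S 0 = 0
  mono : ∀ g h, S g ≤ S (g + h)
  lip : ∀ g h, |S g - S h| ≤ K * dG g h

/-- `F_π(x) = E[S(X^π + δ_x) - S(X^π)]`. -/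
def Fcost {M : Type*} [MeasurableSpace M] (S : Multiset M → ℝ) (π : Measure M) (x : M) : ℝ :=
  ∫ g, (S (g + {x}) - S g) ∂(poissonLaw π)

/-- The kernel `K_ρ(m,m') = E[S(X^ρ+δ_m+δ_{m'}) - S(X^ρ+δ_{m'}) - S(X^ρ+δ_m) + S(X^ρ)]`. -/
def Kker {M : Type*} [MeasurableSpace M] (S : Multiset M → ℝ) (ρ : Measure M)
    (m m' : M) : ℝ :=
  ∫ g, (S (g + {m} + {m'}) - S (g + {m'}) - S (g + {m}) + S g) ∂(poissonLaw ρ)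

/-- The operator `D`: `Dπ` is the measure with density `F_π` with respect to `π`. -/
def Dop {M : Type*} [MeasurableSpace M] (S : Multiset M → ℝ) (ρ : Measure M) : Measure M :=
  ρ.withDensity fun x => ENNReal.ofReal (Fcost S ρ x)

/-- Concavity of a selective cost. -/
def ConcaveCost {M : Type*} (S : Multiset M → ℝ) : Prop :=
  ∀ g h k : Multiset M, S (g + h + k) - S (g + h) ≤ S (g + k) - S g

/-- A solution of the mutation–selection dynamics
`ρ_t(A) = ρ₀(A) + t·ν(A) - ∫₀ᵗ (Dρ_s)(A) ds`: a `‖⋅‖_Was`-continuous curve of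
finite nonnegative measures satisfying the integral equation for `t ≥ 0`. -/
def IsSolution {M : Type*} [MetricSpace M] [MeasurableSpace M]
    (S : Multiset M → ℝ) (ν ρ₀ : Measure M) (ρ : ℝ → Measure M) : Prop :=
  (∀ t, IsFiniteMeasure (ρ t)) ∧ ρ 0 = ρ₀ ∧
  (∀ t, 0 ≤ t → ∀ ε > (0:ℝ), ∃ δ > (0:ℝ), ∀ s, 0 ≤ s → |s - t| < δ →
     wasDist dist (ρ s) (ρ t) < ε) ∧
  ∀ t, 0 ≤ t → ∀ A : Set M, MeasurableSet A →
    ((ρ t) A).toReal = (ρ₀ A).toReal + t * (ν A).toReal -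
      ∫ s in (0:ℝ)..t, ((Dop S (ρ s)) A).toReal

/-- The mutation operator `𝔐_n`: add an independent Poisson cloud of new
mutations with intensity `ν/n`. -/
def mutOp {M : Type*} [MeasurableSpace M] (ν : Measure M) (n : ℕ)
    (P : Measure (Multiset M)) : Measure (Multiset M) :=
  Measure.map (fun p : Multiset M × Multiset M => p.1 + p.2)
    (P.prod (poissonLaw (((n : ℝ≥0∞))⁻¹ • ν)))

/-- The selection operator `𝔖_n`: reweight by `e^{-S/n}` and renormalize. -/
def selOp {M : Type*} [MeasurableSpace M] (S : Multiset M → ℝ) (n : ℕ)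
    (P : Measure (Multiset M)) : Measure (Multiset M) :=
  (∫⁻ g, ENNReal.ofReal (Real.exp (-S g / (n : ℝ))) ∂P)⁻¹ •
    P.withDensity fun g => ENNReal.ofReal (Real.exp (-S g / (n : ℝ)))

/-- The complete Poissonization operator `𝔓P = Π_{μP}`. -/
def poisOp {M : Type*} [MeasurableSpace M] (P : Measure (Multiset M)) :
    Measure (Multiset M) :=
  poissonLaw (intensity P)

/-- Restriction `g_B` of a genotype to a set: `g_B(A) = g(A ∩ B)`. -/
def restrictMS {M : Type*} (g : Multiset M) (B : Set M) : Multiset M :=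
  @Multiset.filter M (· ∈ B) (Classical.decPred _) g

/-- The random segregating set determined by a jointly measurable indicator. -/
def segSet {Ω M : Type*} (χ : Ω × M → Bool) (ω : Ω) : Set M :=
  { x | χ (ω, x) = true }

/-- The recombination operator `ℛ`. -/
def recOp {M Ω : Type*} [MeasurableSpace M] [MeasurableSpace Ω]
    (Pr : Measure Ω) (R : Ω → Set M) (P : Measure (Multiset M)) : Measure (Multiset M) :=
  Measure.map (fun q : Ω × Multiset M × Multiset M =>
      restrictMS q.2.1 (R q.1) + restrictMS q.2.2 ((R q.1)ᶜ))
    (Pr.prod (P.prod P))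

/-- Symmetry of a recombination mechanism: the segregating set and its
complement are identically distributed as random sets. -/
def IsSymmetricMech {M Ω : Type*} [MeasurableSpace M] [MeasurableSpace Ω]
    (Pr : Measure Ω) (R : Ω → Set M) : Prop :=
  ∀ lam : Measure M, IsFiniteMeasure lam → ∀ (p : ℕ) (B : Fin p → Set M),
    (∀ i, MeasurableSet (B i)) →
    Measure.map (fun ω => fun i => (lam (B i ∩ R ω)).toReal) Pr =
    Measure.map (fun ω => fun i => (lam (B i ∩ (R ω)ᶜ)).toReal) Pr

/-- `(ℛ, λ)` is shattering with constant `α`: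
`λ(A)³ ≤ 2α·E[λ(A ∩ R)·λ(A ∩ Rᶜ)]` for every Borel `A`. -/
def IsShattering {M Ω : Type*} [MeasurableSpace M] [MeasurableSpace Ω]
    (Pr : Measure Ω) (R : Ω → Set M) (lam : Measure M) (α : ℝ) : Prop :=
  ∀ A : Set M, MeasurableSet A →
    (lam A).toReal ^ 3 ≤
      2 * α * ∫ ω, (lam (A ∩ R ω)).toReal * (lam (A ∩ (R ω)ᶜ)).toReal ∂Pr

open ProbabilityTheory

-- numeric recursion lemma
lemma MSEW_rec_bound {c C : ℝ} (hc : 0 ≤ c) (hC : 2*c ≤ C) (hC0 : 0 ≤ C) (v : ℕ → ℝ)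
    (hv0 : ∀ n, 0 ≤ v n) (hbase : v 0 ≤ C)
    (hrec : ∀ n, c * v (n+1) ≤ c * v n - (v n)^2) :
    ∀ n, v n ≤ C / (n+1) := by
  rcases eq_or_lt_of_le hc with hc0 | hcpos
  · intro n
    have h := hrec n
    rw [← hc0] at h
    simp only [zero_mul, zero_sub] at h
    have : v n = 0 := by nlinarith [hv0 n, sq_nonneg (v n)]
    rw [this]
    positivity
  · intro n
    induction n with
    | zero => simpa using hbase
    | succ n ih =>
      have hn2 : (0:ℝ) < (n:ℝ) + 2 := by positivity
      have hn1 : (0:ℝ) < (n:ℝ) + 1 := by positivity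
      by_cases hle : v n ≤ C / ((n:ℝ) + 2)
      · have h := hrec n
        have : v (n+1) ≤ v n := by nlinarith [sq_nonneg (v n)]
        calc v (n+1) ≤ v n := this
          _ ≤ C / ((n:ℝ) + 2) := hle
          _ = C / ((n+1:ℕ) + 1) := by push_cast; ring_nf
      · push_neg at hle
        have hgt : C < v n * ((n:ℝ)+2) := (div_lt_iff₀ hn2).1 hle
        have h2c : 2*c*(v n) ≤ ((n:ℝ)+2) * (v n)^2 := by nlinarith [hv0 n]
        have h3 : ((n:ℝ)+2) * (c * v (n+1)) ≤ (n:ℝ) * (c * v n) := by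
          have := hrec n
          nlinarith
        -- v n ≤ C/(n+1): multiply
        have h4 : ((n:ℝ)+1) * v n ≤ C := by
          have := ih
          rw [le_div_iff₀ hn1] at this
          linarith [this]
        have : v (n+1) ≤ C / ((n:ℝ)+2) := by
          rw [le_div_iff₀ hn2]
          have hc' := hcpos
          nlinarith [hv0 n, hv0 (n+1), mul_nonneg (le_of_lt hcpos) (hv0 (n+1))]
        calc v (n+1) ≤ C / ((n:ℝ) + 2) := this
          _ = C / ((n+1:ℕ) + 1) := by push_cast; ring_nf

-- Jensen
lemma MSEW_jensen_sq {Ω : Type*} [MeasurableSpace Ω] (Pr : Measure Ω) [IsProbabilityMeasure Pr]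
    {f : Ω → ℝ} {C : ℝ} (hf : Measurable f) (hb : ∀ ω, |f ω| ≤ C) :
    (∫ ω, f ω ∂Pr)^2 ≤ ∫ ω, (f ω)^2 ∂Pr := by
  have hmem : MemLp f 2 Pr :=
    (memLp_top_of_bound hf.aestronglyMeasurable C (Filter.Eventually.of_forall hb)).mono_exponent le_top
  have h := ProbabilityTheory.variance_nonneg f Pr
  rw [ProbabilityTheory.variance_eq_sub hmem] at h
  simp only [Pi.pow_apply] at h
  linarith

namespace MSEWIndep

variable {Ω : Type*} [MeasurableSpace Ω] {μ : Measure Ω}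

lemma MSEW_iIndep_comp {ι ι' : Type*} {m : ι → MeasurableSpace Ω} (h : iIndep m μ)
    {f : ι' → ι} (hf : Function.Injective f) : iIndep (fun i => m (f i)) μ := by
  classical
  rw [iIndep_iff] at h ⊢
  intro S s hs
  set s' : ι → Set Ω := fun i => if h' : ∃ a ∈ S, f a = i then s h'.choose else Set.univ with hs'def
  have hs' : ∀ i' ∈ S, s' (f i') = s i' := by
    intro i' hi'
    have hex : ∃ a ∈ S, f a = f i' := ⟨i', hi', rfl⟩
    have : hex.choose = i' := hf hex.choose_spec.2
    simp only [hs'def, dif_pos hex, this]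
  have key := h (S.map ⟨f, hf⟩) (f := s') ?_
  · have h1 : (⋂ i ∈ S.map ⟨f, hf⟩, s' i) = ⋂ i ∈ S, s i := by
      ext ω
      simp only [Set.mem_iInter, Finset.mem_map, Function.Embedding.coeFn_mk]
      constructor
      · intro hh i hi
        rw [← hs' i hi]; exact hh (f i) ⟨i, hi, rfl⟩
      · rintro hh i ⟨a, ha, rfl⟩
        rw [hs' a ha]; exact hh a ha
    have h2 : (∏ i ∈ S.map ⟨f, hf⟩, μ (s' i)) = ∏ i ∈ S, μ (s i) := by
      rw [Finset.prod_map]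
      exact Finset.prod_congr rfl fun i hi => by rw [Function.Embedding.coeFn_mk, hs' i hi]
    rw [h1, h2] at key
    exact key
  · rintro i hi
    rw [Finset.mem_map] at hi
    obtain ⟨a, ha, rfl⟩ := hi
    rw [Function.Embedding.coeFn_mk, hs' a ha]
    exact hs a ha

lemma MSEW_indep_split {k : ℕ} {m : Fin (k+1) → MeasurableSpace Ω} (h : iIndep m μ)
    (s : Fin (k+1) → Set Ω) (hms : ∀ i, MeasurableSet[m i] (s i)) :
    μ (s 0 ∩ ⋂ j : Fin k, s j.succ) = μ (s 0) * ∏ j : Fin k, μ (s j.succ) := by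
  have key := h.meas_iInter hms
  have h1 : (⋂ i, s i) = s 0 ∩ ⋂ j : Fin k, s j.succ := by
    ext ω
    simp only [Set.mem_iInter, Set.mem_inter_iff]
    exact Fin.forall_fin_succ
  rw [h1, Fin.prod_univ_succ] at key
  exact key

lemma MSEW_indep_tail {k : ℕ} {m : Fin (k+1) → MeasurableSpace Ω} (h : iIndep m μ)
    (s : Fin (k+1) → Set Ω) (hms : ∀ i, MeasurableSet[m i] (s i)) :
    μ (⋂ j : Fin k, s j.succ) = ∏ j : Fin k, μ (s j.succ) := by
  have key := h.meas_biInter (S := Finset.univ.map ⟨Fin.succ, Fin.succ_injective k⟩)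
    (s := s) (fun i _ => hms i)
  have h1 : (⋂ i ∈ Finset.univ.map ⟨Fin.succ, Fin.succ_injective k⟩, s i)
      = ⋂ j : Fin k, s j.succ := by
    ext ω
    simp only [Set.mem_iInter, Finset.mem_map, Function.Embedding.coeFn_mk, Finset.mem_univ,
      true_and]
    constructor
    · intro hh j; exact hh _ ⟨j, rfl⟩
    · rintro hh i ⟨a, rfl⟩; exact hh a
  have h2 : (∏ i ∈ Finset.univ.map ⟨Fin.succ, Fin.succ_injective k⟩, μ (s i))
      = ∏ j : Fin k, μ (s j.succ) := by
    rw [Finset.prod_map]; rfl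
  rw [h1, h2] at key
  exact key

end MSEWIndep
open MSEWIndep

namespace T
variable {Ω : Type*} {M : Type*} [MeasurableSpace Ω] [MeasurableSpace M]

def cellPre {k : ℕ} (χ : Fin k → Ω × M → Bool) (ε : Fin k → Bool) : Set (Ω × M) :=
  ⋂ j, if ε j then χ j ⁻¹' {true} else (χ j ⁻¹' {true})ᶜ

lemma mem_cellPre {k : ℕ} (χ : Fin k → Ω × M → Bool) (ε : Fin k → Bool) (p : Ω × M) :
    p ∈ cellPre χ ε ↔ ∀ j, χ j p = ε j := by
  simp only [cellPre, Set.mem_iInter]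
  refine forall_congr' fun j => ?_
  cases hj : ε j <;> simp [hj]

lemma measurableSet_cellPre {k : ℕ} {χ : Fin k → Ω × M → Bool} (hχ : ∀ j, Measurable (χ j))
    (ε : Fin k → Bool) : MeasurableSet (cellPre χ ε) := by
  refine MeasurableSet.iInter fun j => ?_
  split_ifs
  · exact (hχ j) (measurableSet_singleton true)
  · exact ((hχ j) (measurableSet_singleton true)).compl

/-- the cell of the partition generated by the segregating sets. -/
def Acell {k : ℕ} (χ : Fin k → Ω × M → Bool) (ε : Fin k → Bool) (ω : Ω) : Set M :=
  ⋂ j, if ε j then segSet (χ j) ω else (segSet (χ j) ω)ᶜ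

lemma mem_Acell {k : ℕ} (χ : Fin k → Ω × M → Bool) (ε : Fin k → Bool) (ω : Ω) (x : M) :
    x ∈ Acell χ ε ω ↔ ∀ j, χ j (ω, x) = ε j := by
  simp only [Acell, Set.mem_iInter]
  refine forall_congr' fun j => ?_
  cases hj : ε j <;> simp [hj, segSet]

lemma Acell_eq_preimage {k : ℕ} (χ : Fin k → Ω × M → Bool) (ε : Fin k → Bool) (ω : Ω) :
    Acell χ ε ω = Prod.mk ω ⁻¹' cellPre χ ε := by
  ext x
  rw [mem_Acell, Set.mem_preimage, mem_cellPre]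

lemma measurableSet_Acell {k : ℕ} {χ : Fin k → Ω × M → Bool} (hχ : ∀ j, Measurable (χ j))
    (ε : Fin k → Bool) (ω : Ω) : MeasurableSet (Acell χ ε ω) := by
  rw [Acell_eq_preimage]
  exact (measurableSet_cellPre hχ ε).preimage measurable_prodMk_left

lemma Acell_disjoint {k : ℕ} (χ : Fin k → Ω × M → Bool) {ε ε' : Fin k → Bool} (h : ε ≠ ε')
    (ω : Ω) : Disjoint (Acell χ ε ω) (Acell χ ε' ω) := by
  rw [Set.disjoint_left]
  intro x hx hx'
  rw [mem_Acell] at hx hx'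
  exact h (funext fun j => by rw [← hx j, ← hx' j])

lemma iUnion_Acell {k : ℕ} (χ : Fin k → Ω × M → Bool) (ω : Ω) :
    (⋃ ε : Fin k → Bool, Acell χ ε ω) = Set.univ := by
  ext x
  simp only [Set.mem_iUnion, Set.mem_univ, iff_true]
  exact ⟨fun j => χ j (ω, x), (mem_Acell _ _ _ _).2 fun j => rfl⟩

lemma sum_lam_Acell {k : ℕ} (lam : Measure M) {χ : Fin k → Ω × M → Bool}
    (hχ : ∀ j, Measurable (χ j)) (ω : Ω) :
    ∑ ε : Fin k → Bool, lam (Acell χ ε ω) = lam Set.univ := by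
  rw [← iUnion_Acell χ ω, measure_iUnion (fun ε ε' h => Acell_disjoint χ h ω)
    (fun ε => measurableSet_Acell hχ ε ω), tsum_fintype]

lemma sum_toReal_lam_Acell {k : ℕ} (lam : Measure M) [IsFiniteMeasure lam]
    {χ : Fin k → Ω × M → Bool} (hχ : ∀ j, Measurable (χ j)) (ω : Ω) :
    ∑ ε : Fin k → Bool, (lam (Acell χ ε ω)).toReal = (lam Set.univ).toReal := by
  rw [← ENNReal.toReal_sum (fun ε _ => measure_ne_top lam _), sum_lam_Acell lam hχ ω]


def Wpair {k : ℕ} (ψ : Fin k → Ω × M → Bool) (σ : Ω × M → Bool) : Set ((Ω × Ω) × (M × M)) :=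
  {q | (∀ j, ψ j (q.1.1, q.2.1) = ψ j (q.1.1, q.2.2)) ∧
    σ (q.1.2, q.2.1) = true ∧ σ (q.1.2, q.2.2) = false}

def Wdiag {k : ℕ} (ψ : Fin k → Ω × M → Bool) (σ : Ω × M → Bool) : Set (Ω × (M × M)) :=
  (fun q : Ω × (M × M) => ((q.1, q.1), q.2)) ⁻¹' Wpair ψ σ

lemma meas_eq_bool {γ : Type*} [MeasurableSpace γ] {f g : γ → Bool} (hf : Measurable f)
    (hg : Measurable g) : MeasurableSet {q | f q = g q} := by
  have : {q | f q = g q} = (f ⁻¹' {true} ∩ g ⁻¹' {true}) ∪ (f ⁻¹' {false} ∩ g ⁻¹' {false}) := by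
    ext q
    cases hq : f q <;> cases hq' : g q <;> simp [hq, hq']
  rw [this]
  exact ((hf (measurableSet_singleton true)).inter (hg (measurableSet_singleton true))).union
    ((hf (measurableSet_singleton false)).inter (hg (measurableSet_singleton false)))

lemma measurableSet_Wpair {k : ℕ} {ψ : Fin k → Ω × M → Bool} {σ : Ω × M → Bool}
    (hψ : ∀ j, Measurable (ψ j)) (hσ : Measurable σ) : MeasurableSet (Wpair ψ σ) := by
  have h1 : Wpair ψ σ = (⋂ j, {q : (Ω × Ω) × (M × M) | ψ j (q.1.1, q.2.1) = ψ j (q.1.1, q.2.2)})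
      ∩ ({q : (Ω × Ω) × (M × M) | σ (q.1.2, q.2.1) = true}
        ∩ {q : (Ω × Ω) × (M × M) | σ (q.1.2, q.2.2) = false}) := by
    ext q
    simp only [Wpair, Set.mem_inter_iff, Set.mem_iInter, Set.mem_setOf_eq]
  rw [h1]
  have hm1 : Measurable fun q : (Ω × Ω) × (M × M) => (q.1.1, q.2.1) :=
    (measurable_fst.comp measurable_fst).prodMk (measurable_fst.comp measurable_snd)
  have hm2 : Measurable fun q : (Ω × Ω) × (M × M) => (q.1.1, q.2.2) :=
    (measurable_fst.comp measurable_fst).prodMk (measurable_snd.comp measurable_snd)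
  have hm3 : Measurable fun q : (Ω × Ω) × (M × M) => (q.1.2, q.2.1) :=
    (measurable_snd.comp measurable_fst).prodMk (measurable_fst.comp measurable_snd)
  have hm4 : Measurable fun q : (Ω × Ω) × (M × M) => (q.1.2, q.2.2) :=
    (measurable_snd.comp measurable_fst).prodMk (measurable_snd.comp measurable_snd)
  refine (MeasurableSet.iInter fun j => meas_eq_bool ((hψ j).comp hm1) ((hψ j).comp hm2)).inter
    (MeasurableSet.inter ?_ ?_)
  · exact (hσ.comp hm3) (measurableSet_singleton true)
  · exact (hσ.comp hm4) (measurableSet_singleton false)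

lemma measurableSet_Wdiag {k : ℕ} {ψ : Fin k → Ω × M → Bool} {σ : Ω × M → Bool}
    (hψ : ∀ j, Measurable (ψ j)) (hσ : Measurable σ) : MeasurableSet (Wdiag ψ σ) :=
  (measurableSet_Wpair hψ hσ).preimage
    ((measurable_fst.prodMk measurable_fst).prodMk measurable_snd)

lemma sec_Wpair {k : ℕ} (ψ : Fin k → Ω × M → Bool) (σ : Ω × M → Bool) (ω' ω : Ω) :
    Prod.mk (ω', ω) ⁻¹' Wpair ψ σ =
      ⋃ ε : Fin k → Bool, (Acell ψ ε ω' ∩ segSet σ ω) ×ˢ (Acell ψ ε ω' ∩ (segSet σ ω)ᶜ) := by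
  ext ⟨x, y⟩
  simp only [Set.mem_preimage, Wpair, Set.mem_setOf_eq, Set.mem_iUnion, Set.mem_prod,
    Set.mem_inter_iff, mem_Acell, Set.mem_compl_iff]
  constructor
  · rintro ⟨h1, h2, h3⟩
    refine ⟨fun j => ψ j (ω', x), ⟨fun j => rfl, h2⟩, ⟨fun j => (h1 j).symm, ?_⟩⟩
    show ¬ (σ (ω, y) = true)
    simp [h3]
  · rintro ⟨ε, ⟨hx, hx2⟩, ⟨hy, hy2⟩⟩
    refine ⟨fun j => by rw [hx j, hy j], hx2, ?_⟩
    have : ¬ (σ (ω, y) = true) := hy2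
    simpa using this

lemma sec_Wdiag {k : ℕ} (ψ : Fin k → Ω × M → Bool) (σ : Ω × M → Bool) (ω : Ω) :
    Prod.mk ω ⁻¹' Wdiag ψ σ =
      ⋃ ε : Fin k → Bool, (Acell ψ ε ω ∩ segSet σ ω) ×ˢ (Acell ψ ε ω ∩ (segSet σ ω)ᶜ) := by
  have : Prod.mk ω ⁻¹' Wdiag ψ σ = Prod.mk (ω, ω) ⁻¹' Wpair ψ σ := rfl
  rw [this, sec_Wpair]

lemma measurableSet_segSet {χ : Ω × M → Bool} (hχ : Measurable χ) (ω : Ω) :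
    MeasurableSet (segSet χ ω) := by
  have : segSet χ ω = Prod.mk ω ⁻¹' (χ ⁻¹' {true}) := rfl
  rw [this]
  exact (hχ (measurableSet_singleton true)).preimage measurable_prodMk_left

lemma prod_sec_Wpair {k : ℕ} (lam : Measure M) [IsFiniteMeasure lam]
    {ψ : Fin k → Ω × M → Bool} {σ : Ω × M → Bool}
    (hψ : ∀ j, Measurable (ψ j)) (hσ : Measurable σ) (ω' ω : Ω) :
    (lam.prod lam) (Prod.mk (ω', ω) ⁻¹' Wpair ψ σ) =
      ∑ ε : Fin k → Bool,
        lam (Acell ψ ε ω' ∩ segSet σ ω) * lam (Acell ψ ε ω' ∩ (segSet σ ω)ᶜ) := by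
  rw [sec_Wpair, measure_iUnion, tsum_fintype]
  · exact Finset.sum_congr rfl fun ε _ => Measure.prod_prod _ _
  · intro ε ε' h
    exact Set.Disjoint.set_prod_left ((Acell_disjoint ψ h ω').mono Set.inter_subset_left Set.inter_subset_left) _ _
  · intro ε
    exact ((measurableSet_Acell hψ ε ω').inter (measurableSet_segSet hσ ω)).prod
      ((measurableSet_Acell hψ ε ω').inter (measurableSet_segSet hσ ω).compl)

lemma prod_sec_Wdiag {k : ℕ} (lam : Measure M) [IsFiniteMeasure lam]
    {ψ : Fin k → Ω × M → Bool} {σ : Ω × M → Bool}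
    (hψ : ∀ j, Measurable (ψ j)) (hσ : Measurable σ) (ω : Ω) :
    (lam.prod lam) (Prod.mk ω ⁻¹' Wdiag ψ σ) =
      ∑ ε : Fin k → Bool,
        lam (Acell ψ ε ω ∩ segSet σ ω) * lam (Acell ψ ε ω ∩ (segSet σ ω)ᶜ) := by
  have : Prod.mk ω ⁻¹' Wdiag ψ σ = Prod.mk (ω, ω) ⁻¹' Wpair ψ σ := rfl
  rw [this, prod_sec_Wpair lam hψ hσ]


lemma measurableSet_pi_eval {x : M} {b : Bool} :
    MeasurableSet {f : M → Bool | f x = b} := by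
  have : {f : M → Bool | f x = b} = (fun f : M → Bool => f x) ⁻¹' {b} := rfl
  rw [this]
  exact (measurable_pi_apply x) (measurableSet_singleton b)

lemma measurableSet_pi_pair {x y : M} :
    MeasurableSet {f : M → Bool | f x = true ∧ f y = false} := by
  have : {f : M → Bool | f x = true ∧ f y = false}
      = {f : M → Bool | f x = true} ∩ {f : M → Bool | f y = false} := rfl
  rw [this]
  exact measurableSet_pi_eval.inter measurableSet_pi_eval

lemma measurableSet_pi_eq {x y : M} :
    MeasurableSet {f : M → Bool | f x = f y} :=
  meas_eq_bool (measurable_pi_apply x) (measurable_pi_apply y)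

lemma key_indep {k : ℕ} (Pr : Measure Ω) [IsProbabilityMeasure Pr]
    (lam : Measure M) [IsFiniteMeasure lam]
    {χ : Fin (k+1) → Ω × M → Bool} (hχ : ∀ j, Measurable (χ j))
    (hind : ProbabilityTheory.iIndep
      (fun j => MeasurableSpace.comap (fun ω => fun x => χ j (ω, x)) inferInstance) Pr) :
    (Pr.prod (lam.prod lam)) (Wdiag (fun j => χ j.succ) (χ 0)) =
      ((Pr.prod Pr).prod (lam.prod lam)) (Wpair (fun j => χ j.succ) (χ 0)) := by
  rw [Measure.prod_apply_symm (measurableSet_Wdiag (fun j => hχ j.succ) (hχ 0)),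
    Measure.prod_apply_symm (measurableSet_Wpair (fun j => hχ j.succ) (hχ 0))]
  refine lintegral_congr fun z => ?_
  obtain ⟨x, y⟩ := z
  set s : Fin (k+1) → Set Ω := Fin.cons {ω | χ 0 (ω, x) = true ∧ χ 0 (ω, y) = false}
    (fun j => {ω | χ j.succ (ω, x) = χ j.succ (ω, y)}) with hsdef
  have hms : ∀ i, MeasurableSet[MeasurableSpace.comap
      (fun ω => fun z => χ i (ω, z)) inferInstance] (s i) := by
    intro i
    induction i using Fin.cases with
    | zero =>
      refine ⟨{f : M → Bool | f x = true ∧ f y = false}, measurableSet_pi_pair, ?_⟩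
      rw [hsdef, Fin.cons_zero]
      rfl
    | succ j =>
      refine ⟨{f : M → Bool | f x = f y}, measurableSet_pi_eq, ?_⟩
      rw [hsdef, Fin.cons_succ]
      rfl
  have h1 : (fun ω => (ω, (x, y))) ⁻¹' Wdiag (fun j => χ j.succ) (χ 0)
      = s 0 ∩ ⋂ j : Fin k, s j.succ := by
    ext ω
    simp only [hsdef, Set.mem_preimage, Wdiag, Wpair, Set.mem_setOf_eq, Set.mem_inter_iff,
      Set.mem_iInter, Fin.cons_zero, Fin.cons_succ]
    tauto
  have h2 : (fun p : Ω × Ω => (p, (x, y))) ⁻¹' Wpair (fun j => χ j.succ) (χ 0)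
      = (⋂ j : Fin k, s j.succ) ×ˢ s 0 := by
    ext ⟨ω', ω⟩
    simp only [hsdef, Set.mem_preimage, Wpair, Set.mem_setOf_eq, Set.mem_prod, Set.mem_iInter,
      Fin.cons_zero, Fin.cons_succ]
  rw [h1, h2, MSEW_indep_split hind s hms, Measure.prod_prod,
    MSEW_indep_tail hind s hms, mul_comm]



section Analytic
variable (lam : Measure M) [IsFiniteMeasure lam]

lemma meas_toReal_sec {γ : Type*} [MeasurableSpace γ] {D : Set (γ × M)} (hD : MeasurableSet D) :
    Measurable fun p : γ => (lam (Prod.mk p ⁻¹' D)).toReal :=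
  (measurable_measure_prodMk_left hD).ennreal_toReal

lemma toReal_le_univ (s : Set M) : (lam s).toReal ≤ (lam Set.univ).toReal :=
  ENNReal.toReal_mono (measure_ne_top _ _) (measure_mono (Set.subset_univ _))

lemma integrable_of_bdd {γ : Type*} [MeasurableSpace γ] {Q : Measure γ} [IsFiniteMeasure Q]
    {f : γ → ℝ} {C : ℝ} (hm : Measurable f) (hb : ∀ p, |f p| ≤ C) : Integrable f Q :=
  ⟨hm.aestronglyMeasurable, HasFiniteIntegral.of_bounded (C := C)
    (Filter.Eventually.of_forall hb)⟩

lemma AcellS_eq {k : ℕ} (χ' : Fin k → Ω × M → Bool) (σ : Ω × M → Bool) (ε : Fin k → Bool)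
    (ω : Ω) : Acell χ' ε ω ∩ segSet σ ω = Prod.mk ω ⁻¹' (cellPre χ' ε ∩ σ ⁻¹' {true}) := by
  rw [Set.preimage_inter, ← Acell_eq_preimage]
  rfl

lemma AcellSc_eq {k : ℕ} (χ' : Fin k → Ω × M → Bool) (σ : Ω × M → Bool) (ε : Fin k → Bool)
    (ω : Ω) : Acell χ' ε ω ∩ (segSet σ ω)ᶜ
      = Prod.mk ω ⁻¹' (cellPre χ' ε ∩ (σ ⁻¹' {true})ᶜ) := by
  rw [Set.preimage_inter, ← Acell_eq_preimage, Set.preimage_compl]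
  rfl

/-- the two-argument rectangle sets -/
def pairD {k : ℕ} (χ' : Fin k → Ω × M → Bool) (σ : Ω × M → Bool) (ε : Fin k → Bool) :
    Set ((Ω × Ω) × M) :=
  (fun r : (Ω × Ω) × M => (r.1.1, r.2)) ⁻¹' cellPre χ' ε
    ∩ (fun r : (Ω × Ω) × M => (r.1.2, r.2)) ⁻¹' (σ ⁻¹' {true})

def pairDc {k : ℕ} (χ' : Fin k → Ω × M → Bool) (σ : Ω × M → Bool) (ε : Fin k → Bool) :
    Set ((Ω × Ω) × M) :=
  (fun r : (Ω × Ω) × M => (r.1.1, r.2)) ⁻¹' cellPre χ' ε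
    ∩ ((fun r : (Ω × Ω) × M => (r.1.2, r.2)) ⁻¹' (σ ⁻¹' {true}))ᶜ

lemma measurable_pair_fst : Measurable fun r : (Ω × Ω) × M => (r.1.1, r.2) :=
  (measurable_fst.comp measurable_fst).prodMk measurable_snd

lemma measurable_pair_snd : Measurable fun r : (Ω × Ω) × M => (r.1.2, r.2) :=
  (measurable_snd.comp measurable_fst).prodMk measurable_snd

lemma measurableSet_pairD {k : ℕ} {χ' : Fin k → Ω × M → Bool} {σ : Ω × M → Bool}
    (hχ' : ∀ j, Measurable (χ' j)) (hσ : Measurable σ) (ε : Fin k → Bool) :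
    MeasurableSet (pairD χ' σ ε) :=
  ((measurableSet_cellPre hχ' ε).preimage measurable_pair_fst).inter
    ((hσ (measurableSet_singleton true)).preimage measurable_pair_snd)

lemma measurableSet_pairDc {k : ℕ} {χ' : Fin k → Ω × M → Bool} {σ : Ω × M → Bool}
    (hχ' : ∀ j, Measurable (χ' j)) (hσ : Measurable σ) (ε : Fin k → Bool) :
    MeasurableSet (pairDc χ' σ ε) :=
  ((measurableSet_cellPre hχ' ε).preimage measurable_pair_fst).inter
    ((hσ (measurableSet_singleton true)).preimage measurable_pair_snd).compl

lemma pairD_sec {k : ℕ} (χ' : Fin k → Ω × M → Bool) (σ : Ω × M → Bool) (ε : Fin k → Bool)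
    (p : Ω × Ω) : Prod.mk p ⁻¹' pairD χ' σ ε = Acell χ' ε p.1 ∩ segSet σ p.2 := by
  ext x
  simp only [pairD, Set.mem_preimage, Set.mem_inter_iff, Acell_eq_preimage, Set.mem_setOf_eq]
  rfl

lemma pairDc_sec {k : ℕ} (χ' : Fin k → Ω × M → Bool) (σ : Ω × M → Bool) (ε : Fin k → Bool)
    (p : Ω × Ω) : Prod.mk p ⁻¹' pairDc χ' σ ε = Acell χ' ε p.1 ∩ (segSet σ p.2)ᶜ := by
  ext x
  simp only [pairDc, Set.mem_preimage, Set.mem_inter_iff, Acell_eq_preimage, Set.mem_compl_iff,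
    Set.mem_setOf_eq]
  rfl

end Analytic


section StepHelpers
variable (lam : Measure M) [IsFiniteMeasure lam]

lemma fixedA_sec (σ : Ω × M → Bool) (A : Set M) (ω : Ω) :
    Prod.mk ω ⁻¹' (Prod.snd ⁻¹' A ∩ σ ⁻¹' {true}) = A ∩ segSet σ ω := by
  ext x
  simp only [Set.mem_preimage, Set.mem_inter_iff, Set.mem_singleton_iff]
  rfl

lemma fixedA_sec_compl (σ : Ω × M → Bool) (A : Set M) (ω : Ω) :
    Prod.mk ω ⁻¹' (Prod.snd ⁻¹' A ∩ (σ ⁻¹' {true})ᶜ) = A ∩ (segSet σ ω)ᶜ := by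
  ext x
  simp only [Set.mem_preimage, Set.mem_inter_iff, Set.mem_compl_iff, Set.mem_singleton_iff]
  rfl

lemma measurable_fixedA {σ : Ω × M → Bool} (hσ : Measurable σ) {A : Set M}
    (hA : MeasurableSet A) :
    Measurable fun ω => (lam (A ∩ segSet σ ω)).toReal := by
  have : ∀ ω, A ∩ segSet σ ω = Prod.mk ω ⁻¹' (Prod.snd ⁻¹' A ∩ σ ⁻¹' {true}) :=
    fun ω => (fixedA_sec σ A ω).symm
  simp_rw [this]
  exact meas_toReal_sec lam ((hA.preimage measurable_snd).inter
    (hσ (measurableSet_singleton true)))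

lemma measurable_fixedA_compl {σ : Ω × M → Bool} (hσ : Measurable σ) {A : Set M}
    (hA : MeasurableSet A) :
    Measurable fun ω => (lam (A ∩ (segSet σ ω)ᶜ)).toReal := by
  have : ∀ ω, A ∩ (segSet σ ω)ᶜ = Prod.mk ω ⁻¹' (Prod.snd ⁻¹' A ∩ (σ ⁻¹' {true})ᶜ) :=
    fun ω => (fixedA_sec_compl σ A ω).symm
  simp_rw [this]
  exact meas_toReal_sec lam ((hA.preimage measurable_snd).inter
    (hσ (measurableSet_singleton true)).compl)

end StepHelpers

lemma sum_abs_le_card {ι : Type*} [Fintype ι] (F : ι → ℝ) (C : ℝ) (h : ∀ i, |F i| ≤ C) :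
    |∑ i, F i| ≤ (Fintype.card ι : ℝ) * C := by
  calc |∑ i, F i| ≤ ∑ i, |F i| := Finset.abs_sum_le_sum_abs _ _
    _ ≤ Finset.univ.card • C := Finset.sum_le_card_nsmul _ _ C (fun i _ => h i)
    _ = (Fintype.card ι : ℝ) * C := by rw [nsmul_eq_mul]; rfl

lemma cs_cube {ι : Type*} [Fintype ι] (a : ι → ℝ) (ha : ∀ i, 0 ≤ a i) :
    (∑ i, (a i) ^ 2) ^ 2 ≤ (∑ i, a i) * (∑ i, (a i) ^ 3) := by
  have key := Finset.sum_mul_sq_le_sq_mul_sq Finset.univ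
    (fun i => Real.sqrt (a i)) (fun i => Real.sqrt (a i) * a i)
  have h1 : ∀ i, Real.sqrt (a i) * (Real.sqrt (a i) * a i) = (a i) ^ 2 := by
    intro i
    rw [← mul_assoc, Real.mul_self_sqrt (ha i)]
    ring
  have h2 : ∀ i, Real.sqrt (a i) ^ 2 = a i := fun i => Real.sq_sqrt (ha i)
  have h3 : ∀ i, (Real.sqrt (a i) * a i) ^ 2 = (a i) ^ 3 := by
    intro i
    rw [mul_pow, h2]
    ring
  simp only [h1, h2, h3] at key
  exact key

lemma Acell_cons {k : ℕ} (χ : Fin (k+1) → Ω × M → Bool) (b : Bool) (ε' : Fin k → Bool) (ω : Ω) :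
    Acell χ (Fin.cons b ε') ω = Acell (fun j => χ j.succ) ε' ω ∩
      (if b then segSet (χ 0) ω else (segSet (χ 0) ω)ᶜ) := by
  ext x
  simp only [mem_Acell, Set.mem_inter_iff, Fin.forall_fin_succ, Fin.cons_zero, Fin.cons_succ]
  cases b <;> simp [segSet, mem_Acell, and_comm]


lemma pointwise_decomp {k : ℕ} (lam : Measure M) [IsFiniteMeasure lam]
    (χ : Fin (k+1) → Ω × M → Bool) (hχ : ∀ j, Measurable (χ j)) (ω : Ω) :
    ∑ ε : Fin (k+1) → Bool, (lam (Acell χ ε ω)).toReal ^ 2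
      = ∑ ε' : Fin k → Bool, (lam (Acell (fun j => χ j.succ) ε' ω)).toReal ^ 2
        - 2 * ∑ ε' : Fin k → Bool,
            (lam (Acell (fun j => χ j.succ) ε' ω ∩ segSet (χ 0) ω)).toReal *
            (lam (Acell (fun j => χ j.succ) ε' ω ∩ (segSet (χ 0) ω)ᶜ)).toReal := by
  have hre := Fintype.sum_equiv (Fin.consEquiv (fun _ : Fin (k+1) => Bool))
    (fun p : Bool × (Fin k → Bool) => (lam (Acell χ (Fin.cons p.1 p.2) ω)).toReal ^ 2)
    (fun ε : Fin (k+1) → Bool => (lam (Acell χ ε ω)).toReal ^ 2) (fun p => rfl)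
  rw [← hre, Fintype.sum_prod_type, Fintype.sum_bool]
  simp only [Acell_cons, reduceIte, Bool.false_eq_true, if_false]
  rw [← Finset.sum_add_distrib, Finset.mul_sum, ← Finset.sum_sub_distrib]
  refine Finset.sum_congr rfl fun ε' _ => ?_
  set A := Acell (fun j => χ j.succ) ε' ω
  have hS : MeasurableSet (segSet (χ 0) ω) := measurableSet_segSet (hχ 0) ω
  have hsplit : (lam A).toReal
      = (lam (A ∩ segSet (χ 0) ω)).toReal + (lam (A ∩ (segSet (χ 0) ω)ᶜ)).toReal := by
    rw [← ENNReal.toReal_add (measure_ne_top _ _) (measure_ne_top _ _)]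
    congr 1
    rw [← Set.diff_eq]
    exact (measure_inter_add_diff A hS).symm
  rw [hsplit]
  ring_nf


lemma W_eq {k : ℕ} (Pr : Measure Ω) [IsProbabilityMeasure Pr]
    (lam : Measure M) [IsFiniteMeasure lam]
    {ψ : Fin k → Ω × M → Bool} {σ : Ω × M → Bool}
    (hψ : ∀ j, Measurable (ψ j)) (hσ : Measurable σ) :
    ∫ ω, (∑ ε' : Fin k → Bool, (lam (Acell ψ ε' ω ∩ segSet σ ω)).toReal *
        (lam (Acell ψ ε' ω ∩ (segSet σ ω)ᶜ)).toReal) ∂Pr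
      = ((Pr.prod (lam.prod lam)) (Wdiag ψ σ)).toReal := by
  have h1 : ∀ ω, (∑ ε' : Fin k → Bool, (lam (Acell ψ ε' ω ∩ segSet σ ω)).toReal *
      (lam (Acell ψ ε' ω ∩ (segSet σ ω)ᶜ)).toReal)
      = ((lam.prod lam) (Prod.mk ω ⁻¹' Wdiag ψ σ)).toReal := by
    intro ω
    rw [prod_sec_Wdiag lam hψ hσ ω,
      ENNReal.toReal_sum (fun ε _ => ENNReal.mul_ne_top (measure_ne_top _ _)
        (measure_ne_top _ _))]
    exact Finset.sum_congr rfl fun ε _ => (ENNReal.toReal_mul).symm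
  simp_rw [h1]
  rw [Measure.prod_apply (measurableSet_Wdiag hψ hσ)]
  exact integral_toReal (measurable_measure_prodMk_left
    (measurableSet_Wdiag hψ hσ)).aemeasurable
    (Filter.Eventually.of_forall fun ω => measure_lt_top _ _)

lemma H_eq {k : ℕ} (Pr : Measure Ω) [IsProbabilityMeasure Pr]
    (lam : Measure M) [IsFiniteMeasure lam]
    {ψ : Fin k → Ω × M → Bool} {σ : Ω × M → Bool}
    (hψ : ∀ j, Measurable (ψ j)) (hσ : Measurable σ) :
    ∫ p, (∑ ε' : Fin k → Bool, (lam (Acell ψ ε' p.1 ∩ segSet σ p.2)).toReal *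
        (lam (Acell ψ ε' p.1 ∩ (segSet σ p.2)ᶜ)).toReal) ∂(Pr.prod Pr)
      = (((Pr.prod Pr).prod (lam.prod lam)) (Wpair ψ σ)).toReal := by
  have h1 : ∀ p : Ω × Ω, (∑ ε' : Fin k → Bool, (lam (Acell ψ ε' p.1 ∩ segSet σ p.2)).toReal *
      (lam (Acell ψ ε' p.1 ∩ (segSet σ p.2)ᶜ)).toReal)
      = ((lam.prod lam) (Prod.mk p ⁻¹' Wpair ψ σ)).toReal := by
    rintro ⟨ω', ω⟩
    rw [prod_sec_Wpair lam hψ hσ ω' ω,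
      ENNReal.toReal_sum (fun ε _ => ENNReal.mul_ne_top (measure_ne_top _ _)
        (measure_ne_top _ _))]
    exact Finset.sum_congr rfl fun ε _ => (ENNReal.toReal_mul).symm
  simp_rw [h1]
  rw [Measure.prod_apply (measurableSet_Wpair hψ hσ)]
  exact integral_toReal (measurable_measure_prodMk_left
    (measurableSet_Wpair hψ hσ)).aemeasurable
    (Filter.Eventually.of_forall fun ω => measure_lt_top _ _)


lemma step {k : ℕ} (Pr : Measure Ω) [IsProbabilityMeasure Pr]
    (lam : Measure M) [IsFiniteMeasure lam]
    {χ : Fin (k+1) → Ω × M → Bool} (hχ : ∀ j, Measurable (χ j))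
    (hind : ProbabilityTheory.iIndep
      (fun j => MeasurableSpace.comap (fun ω => fun x => χ j (ω, x)) inferInstance) Pr)
    {α : ℝ} (hα : 0 < α)
    (hshat : ∀ A : Set M, MeasurableSet A → (lam A).toReal ^ 3 ≤
      2 * α * ∫ ω, (lam (A ∩ segSet (χ 0) ω)).toReal *
        (lam (A ∩ (segSet (χ 0) ω)ᶜ)).toReal ∂Pr) :
    α * (lam Set.univ).toReal *
        ∫ ω, ∑ ε : Fin (k+1) → Bool, (lam (Acell χ ε ω)).toReal ^ 2 ∂Pr
      ≤ α * (lam Set.univ).toReal *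
          (∫ ω, ∑ ε' : Fin k → Bool, (lam (Acell (fun j => χ j.succ) ε' ω)).toReal ^ 2 ∂Pr)
        - (∫ ω, ∑ ε' : Fin k → Bool,
            (lam (Acell (fun j => χ j.succ) ε' ω)).toReal ^ 2 ∂Pr) ^ 2 := by
  have hψ : ∀ j : Fin k, Measurable ((fun j : Fin k => χ j.succ) j) := fun j => hχ j.succ
  have hσ : Measurable (χ 0) := hχ 0
  set L := (lam Set.univ).toReal with hLdef
  have hL0 : 0 ≤ L := ENNReal.toReal_nonneg
  set cardC : ℝ := (Fintype.card (Fin k → Bool) : ℝ) with hcardC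
  have hcard0 : 0 ≤ cardC := by positivity
  -- basic bounds
  have hb1 : ∀ s : Set M, |(lam s).toReal| ≤ L := fun s => by
    rw [abs_of_nonneg ENNReal.toReal_nonneg]; exact toReal_le_univ lam s
  have hbsq : ∀ s : Set M, |(lam s).toReal ^ 2| ≤ L ^ 2 := fun s => by
    rw [abs_pow]
    exact pow_le_pow_left₀ (abs_nonneg _) (hb1 s) 2
  have hbmul : ∀ s t : Set M, |(lam s).toReal * (lam t).toReal| ≤ L ^ 2 := fun s t => by
    rw [abs_mul, sq]
    exact mul_le_mul (hb1 s) (hb1 t) (abs_nonneg _) hL0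
  -- the three functions
  have hmf1e : ∀ ε' : Fin k → Bool,
      Measurable fun ω => (lam (Acell (fun j : Fin k => χ j.succ) ε' ω)).toReal := by
    intro ε'
    simp_rw [Acell_eq_preimage]
    exact meas_toReal_sec lam (measurableSet_cellPre hψ ε')
  have hmf1 : Measurable fun ω => ∑ ε' : Fin k → Bool,
      (lam (Acell (fun j : Fin k => χ j.succ) ε' ω)).toReal ^ 2 :=
    Finset.measurable_sum _ fun ε' _ => (hmf1e ε').pow_const 2
  have hbf1 : ∀ ω, |∑ ε' : Fin k → Bool,
      (lam (Acell (fun j : Fin k => χ j.succ) ε' ω)).toReal ^ 2| ≤ cardC * L ^ 2 :=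
    fun ω => sum_abs_le_card _ _ (fun ε' => hbsq _)
  have hmWe : ∀ ε' : Fin k → Bool, Measurable fun ω =>
      (lam (Acell (fun j : Fin k => χ j.succ) ε' ω ∩ segSet (χ 0) ω)).toReal := by
    intro ε'
    simp_rw [AcellS_eq]
    exact meas_toReal_sec lam ((measurableSet_cellPre hψ ε').inter
      (hσ (measurableSet_singleton true)))
  have hmWec : ∀ ε' : Fin k → Bool, Measurable fun ω =>
      (lam (Acell (fun j : Fin k => χ j.succ) ε' ω ∩ (segSet (χ 0) ω)ᶜ)).toReal := by
    intro ε'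
    simp_rw [AcellSc_eq]
    exact meas_toReal_sec lam ((measurableSet_cellPre hψ ε').inter
      (hσ (measurableSet_singleton true)).compl)
  have hmW : Measurable fun ω => ∑ ε' : Fin k → Bool,
      (lam (Acell (fun j : Fin k => χ j.succ) ε' ω ∩ segSet (χ 0) ω)).toReal *
      (lam (Acell (fun j : Fin k => χ j.succ) ε' ω ∩ (segSet (χ 0) ω)ᶜ)).toReal :=
    Finset.measurable_sum _ fun ε' _ => (hmWe ε').mul (hmWec ε')
  have hbW : ∀ ω, |∑ ε' : Fin k → Bool,
      (lam (Acell (fun j : Fin k => χ j.succ) ε' ω ∩ segSet (χ 0) ω)).toReal *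
      (lam (Acell (fun j : Fin k => χ j.succ) ε' ω ∩ (segSet (χ 0) ω)ᶜ)).toReal|
      ≤ cardC * L ^ 2 := fun ω => sum_abs_le_card _ _ (fun ε' => hbmul _ _)
  have hmHe : ∀ ε' : Fin k → Bool, Measurable fun p : Ω × Ω =>
      (lam (Acell (fun j : Fin k => χ j.succ) ε' p.1 ∩ segSet (χ 0) p.2)).toReal := by
    intro ε'
    have : ∀ p : Ω × Ω, Acell (fun j : Fin k => χ j.succ) ε' p.1 ∩ segSet (χ 0) p.2
        = Prod.mk p ⁻¹' pairD (fun j : Fin k => χ j.succ) (χ 0) ε' := by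
      intro p
      rw [pairD_sec]
    simp_rw [this]
    exact meas_toReal_sec lam (measurableSet_pairD hψ hσ ε')
  have hmHec : ∀ ε' : Fin k → Bool, Measurable fun p : Ω × Ω =>
      (lam (Acell (fun j : Fin k => χ j.succ) ε' p.1 ∩ (segSet (χ 0) p.2)ᶜ)).toReal := by
    intro ε'
    have : ∀ p : Ω × Ω, Acell (fun j : Fin k => χ j.succ) ε' p.1 ∩ (segSet (χ 0) p.2)ᶜ
        = Prod.mk p ⁻¹' pairDc (fun j : Fin k => χ j.succ) (χ 0) ε' := by
      intro p
      rw [pairDc_sec]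
    simp_rw [this]
    exact meas_toReal_sec lam (measurableSet_pairDc hψ hσ ε')
  have hmH : Measurable fun p : Ω × Ω => ∑ ε' : Fin k → Bool,
      (lam (Acell (fun j : Fin k => χ j.succ) ε' p.1 ∩ segSet (χ 0) p.2)).toReal *
      (lam (Acell (fun j : Fin k => χ j.succ) ε' p.1 ∩ (segSet (χ 0) p.2)ᶜ)).toReal :=
    Finset.measurable_sum _ fun ε' _ => (hmHe ε').mul (hmHec ε')
  have hbH : ∀ p : Ω × Ω, |∑ ε' : Fin k → Bool,
      (lam (Acell (fun j : Fin k => χ j.succ) ε' p.1 ∩ segSet (χ 0) p.2)).toReal *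
      (lam (Acell (fun j : Fin k => χ j.succ) ε' p.1 ∩ (segSet (χ 0) p.2)ᶜ)).toReal|
      ≤ cardC * L ^ 2 := fun p => sum_abs_le_card _ _ (fun ε' => hbmul _ _)
  -- integrability
  have hif1 : Integrable (fun ω => ∑ ε' : Fin k → Bool,
      (lam (Acell (fun j : Fin k => χ j.succ) ε' ω)).toReal ^ 2) Pr :=
    integrable_of_bdd hmf1 hbf1
  have hif1sq : Integrable (fun ω => (∑ ε' : Fin k → Bool,
      (lam (Acell (fun j : Fin k => χ j.succ) ε' ω)).toReal ^ 2) ^ 2) Pr := by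
    refine integrable_of_bdd (hmf1.pow_const 2) (C := (cardC * L ^ 2) ^ 2) fun ω => ?_
    rw [abs_pow]
    exact pow_le_pow_left₀ (abs_nonneg _) (hbf1 ω) 2
  have hiW : Integrable (fun ω => ∑ ε' : Fin k → Bool,
      (lam (Acell (fun j : Fin k => χ j.succ) ε' ω ∩ segSet (χ 0) ω)).toReal *
      (lam (Acell (fun j : Fin k => χ j.succ) ε' ω ∩ (segSet (χ 0) ω)ᶜ)).toReal) Pr :=
    integrable_of_bdd hmW hbW
  have hiH : Integrable (fun p : Ω × Ω => ∑ ε' : Fin k → Bool,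
      (lam (Acell (fun j : Fin k => χ j.succ) ε' p.1 ∩ segSet (χ 0) p.2)).toReal *
      (lam (Acell (fun j : Fin k => χ j.succ) ε' p.1 ∩ (segSet (χ 0) p.2)ᶜ)).toReal)
      (Pr.prod Pr) := integrable_of_bdd hmH hbH
  -- the independence identity
  have hWH : (∫ ω, ∑ ε' : Fin k → Bool,
      (lam (Acell (fun j : Fin k => χ j.succ) ε' ω ∩ segSet (χ 0) ω)).toReal *
      (lam (Acell (fun j : Fin k => χ j.succ) ε' ω ∩ (segSet (χ 0) ω)ᶜ)).toReal ∂Pr)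
      = ∫ p, (∑ ε' : Fin k → Bool,
        (lam (Acell (fun j : Fin k => χ j.succ) ε' p.1 ∩ segSet (χ 0) p.2)).toReal *
        (lam (Acell (fun j : Fin k => χ j.succ) ε' p.1 ∩ (segSet (χ 0) p.2)ᶜ)).toReal)
        ∂(Pr.prod Pr) := by
    rw [W_eq Pr lam hψ hσ, H_eq Pr lam hψ hσ, key_indep Pr lam hχ hind]
  -- Fubini
  have hprodH : (∫ p, (∑ ε' : Fin k → Bool,
      (lam (Acell (fun j : Fin k => χ j.succ) ε' p.1 ∩ segSet (χ 0) p.2)).toReal *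
      (lam (Acell (fun j : Fin k => χ j.succ) ε' p.1 ∩ (segSet (χ 0) p.2)ᶜ)).toReal)
      ∂(Pr.prod Pr))
      = ∫ ω', (∫ ω, ∑ ε' : Fin k → Bool,
        (lam (Acell (fun j : Fin k => χ j.succ) ε' ω' ∩ segSet (χ 0) ω)).toReal *
        (lam (Acell (fun j : Fin k => χ j.succ) ε' ω' ∩ (segSet (χ 0) ω)ᶜ)).toReal ∂Pr)
        ∂Pr := MeasureTheory.integral_prod _ hiH
  -- the inner integral splits as a sum; apply shattering
  have hg_lb : ∀ ω', ∑ ε' : Fin k → Bool,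
      (lam (Acell (fun j : Fin k => χ j.succ) ε' ω')).toReal ^ 3
      ≤ 2 * α * ∫ ω, ∑ ε' : Fin k → Bool,
        (lam (Acell (fun j : Fin k => χ j.succ) ε' ω' ∩ segSet (χ 0) ω)).toReal *
        (lam (Acell (fun j : Fin k => χ j.succ) ε' ω' ∩ (segSet (χ 0) ω)ᶜ)).toReal ∂Pr := by
    intro ω'
    rw [MeasureTheory.integral_finset_sum _ (f := fun ε' ω =>
        (lam (Acell (fun j : Fin k => χ j.succ) ε' ω' ∩ segSet (χ 0) ω)).toReal *
        (lam (Acell (fun j : Fin k => χ j.succ) ε' ω' ∩ (segSet (χ 0) ω)ᶜ)).toReal)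
      (fun ε' _ => integrable_of_bdd
      ((measurable_fixedA lam hσ (measurableSet_Acell hψ ε' ω')).mul
        (measurable_fixedA_compl lam hσ (measurableSet_Acell hψ ε' ω')))
      (C := L ^ 2) (fun ω => hbmul _ _)), Finset.mul_sum]
    exact Finset.sum_le_sum fun ε' _ => hshat _ (measurableSet_Acell hψ ε' ω')
  -- Cauchy-Schwarz
  have hCS : ∀ ω', (∑ ε' : Fin k → Bool,
      (lam (Acell (fun j : Fin k => χ j.succ) ε' ω')).toReal ^ 2) ^ 2
      ≤ L * ∑ ε' : Fin k → Bool,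
        (lam (Acell (fun j : Fin k => χ j.succ) ε' ω')).toReal ^ 3 := by
    intro ω'
    have := cs_cube (fun ε' : Fin k → Bool =>
      (lam (Acell (fun j : Fin k => χ j.succ) ε' ω')).toReal) (fun _ => ENNReal.toReal_nonneg)
    rwa [sum_toReal_lam_Acell lam hψ ω'] at this
  -- pointwise bound for the outer integrand
  have hpoint : ∀ ω', (∑ ε' : Fin k → Bool,
      (lam (Acell (fun j : Fin k => χ j.succ) ε' ω')).toReal ^ 2) ^ 2
      ≤ (2 * α * L) * ∫ ω, ∑ ε' : Fin k → Bool,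
        (lam (Acell (fun j : Fin k => χ j.succ) ε' ω' ∩ segSet (χ 0) ω)).toReal *
        (lam (Acell (fun j : Fin k => χ j.succ) ε' ω' ∩ (segSet (χ 0) ω)ᶜ)).toReal ∂Pr := by
    intro ω'
    have h1 := hCS ω'
    have h2 := mul_le_mul_of_nonneg_left (hg_lb ω') hL0
    calc (∑ ε' : Fin k → Bool,
        (lam (Acell (fun j : Fin k => χ j.succ) ε' ω')).toReal ^ 2) ^ 2
        ≤ L * ∑ ε' : Fin k → Bool,
          (lam (Acell (fun j : Fin k => χ j.succ) ε' ω')).toReal ^ 3 := h1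
      _ ≤ L * (2 * α * ∫ ω, ∑ ε' : Fin k → Bool,
          (lam (Acell (fun j : Fin k => χ j.succ) ε' ω' ∩ segSet (χ 0) ω)).toReal *
          (lam (Acell (fun j : Fin k => χ j.succ) ε' ω' ∩ (segSet (χ 0) ω)ᶜ)).toReal ∂Pr) :=
        h2
      _ = _ := by ring
  have hgint : Integrable (fun ω' => ∫ ω, ∑ ε' : Fin k → Bool,
      (lam (Acell (fun j : Fin k => χ j.succ) ε' ω' ∩ segSet (χ 0) ω)).toReal *
      (lam (Acell (fun j : Fin k => χ j.succ) ε' ω' ∩ (segSet (χ 0) ω)ᶜ)).toReal ∂Pr) Pr :=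
    hiH.integral_prod_left
  have hint2 : ∫ ω', (∑ ε' : Fin k → Bool,
      (lam (Acell (fun j : Fin k => χ j.succ) ε' ω')).toReal ^ 2) ^ 2 ∂Pr
      ≤ ∫ ω', (2 * α * L) * (∫ ω, ∑ ε' : Fin k → Bool,
        (lam (Acell (fun j : Fin k => χ j.succ) ε' ω' ∩ segSet (χ 0) ω)).toReal *
        (lam (Acell (fun j : Fin k => χ j.succ) ε' ω' ∩ (segSet (χ 0) ω)ᶜ)).toReal ∂Pr) ∂Pr :=
    integral_mono hif1sq (hgint.const_mul _) hpoint
  rw [integral_const_mul, ← hprodH, ← hWH] at hint2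
  have hJ := MSEW_jensen_sq Pr hmf1 hbf1
  have hkey : (∫ ω, ∑ ε' : Fin k → Bool,
      (lam (Acell (fun j : Fin k => χ j.succ) ε' ω)).toReal ^ 2 ∂Pr) ^ 2
      ≤ (2 * α * L) * ∫ ω, ∑ ε' : Fin k → Bool,
        (lam (Acell (fun j : Fin k => χ j.succ) ε' ω ∩ segSet (χ 0) ω)).toReal *
        (lam (Acell (fun j : Fin k => χ j.succ) ε' ω ∩ (segSet (χ 0) ω)ᶜ)).toReal ∂Pr :=
    le_trans hJ hint2
  -- pointwise decomposition and conclusion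
  have hdecomp : (∫ ω, ∑ ε : Fin (k+1) → Bool, (lam (Acell χ ε ω)).toReal ^ 2 ∂Pr)
      = (∫ ω, ∑ ε' : Fin k → Bool,
          (lam (Acell (fun j : Fin k => χ j.succ) ε' ω)).toReal ^ 2 ∂Pr)
        - 2 * ∫ ω, ∑ ε' : Fin k → Bool,
          (lam (Acell (fun j : Fin k => χ j.succ) ε' ω ∩ segSet (χ 0) ω)).toReal *
          (lam (Acell (fun j : Fin k => χ j.succ) ε' ω ∩ (segSet (χ 0) ω)ᶜ)).toReal ∂Pr := by
    have hpt := pointwise_decomp lam χ hχ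
    calc (∫ ω, ∑ ε : Fin (k+1) → Bool, (lam (Acell χ ε ω)).toReal ^ 2 ∂Pr)
        = ∫ ω, ((∑ ε' : Fin k → Bool,
            (lam (Acell (fun j : Fin k => χ j.succ) ε' ω)).toReal ^ 2)
          - 2 * ∑ ε' : Fin k → Bool,
            (lam (Acell (fun j : Fin k => χ j.succ) ε' ω ∩ segSet (χ 0) ω)).toReal *
            (lam (Acell (fun j : Fin k => χ j.succ) ε' ω ∩ (segSet (χ 0) ω)ᶜ)).toReal) ∂Pr := by
          exact integral_congr_ae (Filter.Eventually.of_forall hpt)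
      _ = _ := by
          rw [integral_sub hif1 (hiW.const_mul 2), integral_const_mul]
  rw [hdecomp]
  nlinarith [hkey]


lemma MSEW_numstep {c C v v' : ℝ} (hc : 0 < c) (hC : 2*c ≤ C) (hv : 0 ≤ v) (hv' : 0 ≤ v')
    {n : ℕ} (hvn : v ≤ C/((n:ℝ)+1)) (hrec : c * v' ≤ c * v - v^2) : v' ≤ C/((n:ℝ)+2) := by
  have hn2 : (0:ℝ) < (n:ℝ) + 2 := by positivity
  have hn1 : (0:ℝ) < (n:ℝ) + 1 := by positivity
  by_cases hle : v ≤ C / ((n:ℝ) + 2)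
  · have : v' ≤ v := by nlinarith [sq_nonneg v]
    linarith
  · push_neg at hle
    have hgt : C < v * ((n:ℝ)+2) := (div_lt_iff₀ hn2).1 hle
    have h4 : ((n:ℝ)+1) * v ≤ C := by
      rw [le_div_iff₀ hn1] at hvn
      linarith
    rw [le_div_iff₀ hn2]
    nlinarith [mul_nonneg hc.le hv']

lemma main_induction (Pr : Measure Ω) [IsProbabilityMeasure Pr]
    (lam : Measure M) [IsFiniteMeasure lam] {α : ℝ} (hα : 0 < α) :
    ∀ (k : ℕ) (χ : Fin k → Ω × M → Bool), (∀ j, Measurable (χ j)) →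
    (ProbabilityTheory.iIndep
      (fun j => MeasurableSpace.comap (fun ω => fun x => χ j (ω, x)) inferInstance) Pr) →
    (∀ (j : Fin k) (A : Set M), MeasurableSet A → (lam A).toReal ^ 3 ≤
      2 * α * ∫ ω, (lam (A ∩ segSet (χ j) ω)).toReal *
        (lam (A ∩ (segSet (χ j) ω)ᶜ)).toReal ∂Pr) →
    (∫ ω, ∑ ε : Fin k → Bool, (lam (Acell χ ε ω)).toReal ^ 2 ∂Pr)
      ≤ max ((lam Set.univ).toReal ^ 2) (2 * α * (lam Set.univ).toReal) / ((k:ℝ) + 1) := by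
  intro k
  induction k with
  | zero =>
    intro χ hχ hind hshat
    have hpt : ∀ ω : Ω, ∑ ε : Fin 0 → Bool, (lam (Acell χ ε ω)).toReal ^ 2
        = (lam Set.univ).toReal ^ 2 := by
      intro ω
      rw [Fintype.sum_unique]
      congr 2
      simp [Acell]
    simp_rw [hpt]
    rw [integral_const]
    simp only [measure_univ, probReal_univ, ENNReal.toReal_one, one_smul, Nat.cast_zero, zero_add, div_one]
    exact le_max_left _ _
  | succ k IH =>
    intro χ hχ hind hshat
    have hstep := step Pr lam hχ hind hα (hshat 0)
    have hIH := IH (fun j => χ j.succ) (fun j => hχ j.succ)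
      (MSEW_iIndep_comp hind (Fin.succ_injective k)) (fun j => hshat j.succ)
    set L := (lam Set.univ).toReal with hLdef
    have hL0 : 0 ≤ L := ENNReal.toReal_nonneg
    set C := max (L ^ 2) (2 * α * L) with hCdef
    have hC0 : 0 ≤ C := le_trans (by positivity) (le_max_left _ _)
    have hv0 : 0 ≤ ∫ ω, ∑ ε : Fin (k+1) → Bool, (lam (Acell χ ε ω)).toReal ^ 2 ∂Pr :=
      integral_nonneg fun ω => Finset.sum_nonneg fun ε _ => sq_nonneg _
    have hv0' : 0 ≤ ∫ ω, ∑ ε' : Fin k → Bool,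
        (lam (Acell (fun j => χ j.succ) ε' ω)).toReal ^ 2 ∂Pr :=
      integral_nonneg fun ω => Finset.sum_nonneg fun ε _ => sq_nonneg _
    rcases eq_or_lt_of_le hL0 with hLz | hLpos
    · -- lam univ = 0
      have hz : ∀ ω, ∑ ε : Fin (k+1) → Bool, (lam (Acell χ ε ω)).toReal ^ 2 = 0 := by
        intro ω
        refine Finset.sum_eq_zero fun ε _ => ?_
        have h1 : (lam (Acell χ ε ω)).toReal ≤ L := toReal_le_univ lam _
        have h2 : 0 ≤ (lam (Acell χ ε ω)).toReal := ENNReal.toReal_nonneg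
        have : (lam (Acell χ ε ω)).toReal = 0 := le_antisymm (hLz ▸ h1) h2
        rw [this]
        ring
      simp_rw [hz]
      rw [integral_zero]
      positivity
    · have hc : 0 < α * L := by positivity
      have hC2 : 2 * (α * L) ≤ C := by
        rw [hCdef]
        calc 2 * (α * L) = 2 * α * L := by ring
          _ ≤ max (L ^ 2) (2 * α * L) := le_max_right _ _
      have hnum := MSEW_numstep hc hC2 hv0' hv0 (n := k) (by
        rw [hCdef] at hIH ⊢
        exact hIH) (by
        calc (α * L) * ∫ ω, ∑ ε : Fin (k+1) → Bool, (lam (Acell χ ε ω)).toReal ^ 2 ∂Pr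
            = α * L * ∫ ω, ∑ ε : Fin (k+1) → Bool, (lam (Acell χ ε ω)).toReal ^ 2 ∂Pr := by
              ring
          _ ≤ _ := hstep
          _ = (α * L) * (∫ ω, ∑ ε' : Fin k → Bool,
                (lam (Acell (fun j => χ j.succ) ε' ω)).toReal ^ 2 ∂Pr)
              - (∫ ω, ∑ ε' : Fin k → Bool,
                (lam (Acell (fun j => χ j.succ) ε' ω)).toReal ^ 2 ∂Pr) ^ 2 := by ring)
      have hcast : ((k+1:ℕ):ℝ) + 1 = (k:ℝ) + 2 := by push_cast; ring
      rw [hcast]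
      exact hnum

end T

variable {M : Type*} [MetricSpace M] [CompleteSpace M] [TopologicalSpace.SeparableSpace M]
  [MeasurableSpace M] [BorelSpace M]

theorem iterated_shattering_bound {Ω : Type*} [MeasurableSpace Ω]
    (Pr : Measure Ω) [IsProbabilityMeasure Pr]
    (lam : Measure M) [IsFiniteMeasure lam]
    (k : ℕ) (χ : Fin k → Ω × M → Bool) (hχ : ∀ j, Measurable (χ j))
    (hind : ProbabilityTheory.iIndep
      (fun j => MeasurableSpace.comap (fun ω => fun x => χ j (ω, x)) inferInstance) Pr)
    (hident : ∀ j j' : Fin k, ∀ (p : ℕ) (B : Fin p → Set M),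
      (∀ i, MeasurableSet (B i)) →
      Measure.map (fun ω => fun i => (lam (B i ∩ segSet (χ j) ω)).toReal) Pr =
      Measure.map (fun ω => fun i => (lam (B i ∩ segSet (χ j') ω)).toReal) Pr)
    (hsymm : ∀ j : Fin k, ∀ (p : ℕ) (B : Fin p → Set M),
      (∀ i, MeasurableSet (B i)) →
      Measure.map (fun ω => fun i => (lam (B i ∩ segSet (χ j) ω)).toReal) Pr =
      Measure.map (fun ω => fun i => (lam (B i ∩ (segSet (χ j) ω)ᶜ)).toReal) Pr)
    (α : ℝ) (hα : 0 < α)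
    (hshat : ∀ j : Fin k, IsShattering Pr (segSet (χ j)) lam α) :
    ∫ ω, ∑ ε : Fin k → Bool,
        (lam (⋂ j, if ε j then segSet (χ j) ω else (segSet (χ j) ω)ᶜ)).toReal ^ 2 ∂Pr ≤
      max ((lam Set.univ).toReal ^ 2) (2 * α * (lam Set.univ).toReal) / ((k : ℝ) + 1) := by
  exact T.main_induction Pr lam hα k χ hχ hind (fun j A hA => hshat j A hA)

end MSEW
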